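/- arXiv:2512.00568 — 3 statements merged into one kernel-verified Lean document; each statement's English description precedes it below -/
import Mathlib

section
/- Let K be a p-adic field with absolute ramification index e satisfying e < p - 1, and let E be an elliptic curve over K with formal group Ê(𝔪). If α, α' ∈ 𝔪 represent the same nonzero class in Ê(𝔪)/p (i.e., α = α' +_Ê pβ for some β ∈ Ê(𝔪)), then v(α) = v(α'), where v is the normalized valuation of K. -/
/-! For a group law `x + y + xy·F(x,y)` the difference `(α' +_Ê pβ) - α'` is a multiple of
`pβ ∈ Ê(𝔪^{1+e})`, so `α ≡ α' mod 𝔪^{1+e}`, while a nonzero class has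
`v(α) ≤ e` because `Ê(𝔪^{1+e}) = pÊ(𝔪)`. Two elements congruent modulo `𝔪^{1+e}` whose
valuation is at most `e` have the same valuation. -/

section ExactPowerDivisibility

variable {R : Type*} [CommRing R] {π a b : R} {m : ℕ}

theorem pow_dvd_iff_of_pow_dvd_sub {k : ℕ} (h : π ^ m ∣ a - b) (hk : k ≤ m) :
    π ^ k ∣ a ↔ π ^ k ∣ b :=
  dvd_iff_dvd_of_dvd_sub ((pow_dvd_pow π hk).trans h)

theorem exactPow_iff_of_pow_dvd_sub (h : π ^ m ∣ a - b) (ha : ¬ π ^ m ∣ a) (n : ℕ) :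
    (π ^ n ∣ a ∧ ¬ π ^ (n + 1) ∣ a) ↔ (π ^ n ∣ b ∧ ¬ π ^ (n + 1) ∣ b) := by
  rcases lt_or_ge n m with hnm | hmn
  · rw [pow_dvd_iff_of_pow_dvd_sub h hnm.le, pow_dvd_iff_of_pow_dvd_sub h hnm]
  · have hb : ¬ π ^ m ∣ b := by rwa [← pow_dvd_iff_of_pow_dvd_sub h le_rfl]
    exact iff_of_false (fun hn => ha ((pow_dvd_pow π hmn).trans hn.1))
      (fun hn => hb ((pow_dvd_pow π hmn).trans hn.1))

end ExactPowerDivisibility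

theorem dvd_fadd_sub_left {R : Type*} [CommRing R] {fadd F : R → R → R}
    (hadd : ∀ x y, fadd x y = x + y + x * y * F x y) (x y : R) : y ∣ fadd x y - x :=
  ⟨1 + x * F x y, by rw [hadd]; ring⟩

theorem stmt0_general {O : Type*} [CommRing O] (π : O)
    (e : ℕ)
    (fadd : O → O → O) (F : O → O → O)
    (hadd : ∀ x y, fadd x y = x + y + x * y * F x y)
    (psmul : O → O)
    (hps1 : ∀ x, π ∣ x → π ^ (1 + e) ∣ psmul x)
    (hps2 : ∀ x, π ∣ x → π ^ (1 + e) ∣ x → ∃ β, π ∣ β ∧ psmul β = x)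
    (α α' β : O) (hα : π ∣ α) (hβ : π ∣ β)
    (heq : α = fadd α' (psmul β))
    (hnz : ¬ ∃ γ, π ∣ γ ∧ α = psmul γ)
    (n : ℕ) :
    (π ^ n ∣ α ∧ ¬ π ^ (n + 1) ∣ α) ↔ (π ^ n ∣ α' ∧ ¬ π ^ (n + 1) ∣ α') := by
  have hsub : π ^ (1 + e) ∣ α - α' :=
    (hps1 β hβ).trans (heq ▸ dvd_fadd_sub_left hadd α' (psmul β))
  have hα_not : ¬ π ^ (1 + e) ∣ α := fun h => by
    obtain ⟨γ, hγ, rfl⟩ := hps2 α hα h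
    exact hnz ⟨γ, hγ, rfl⟩
  exact exactPow_iff_of_pow_dvd_sub hsub hα_not n

/-- In the formal group of an elliptic curve over a p-adic field with
absolute ramification index `e < p - 1`, two representatives of the same nonzero class
of `Ê(𝔪)/p` have the same valuation.  Here `O` is the valuation ring, `π` a uniformizer
(so `v(α) = n` iff `π^n ∣ α` and `¬ π^(n+1) ∣ α`), `fadd` is the formal group law, of the
form `x + y + x*y*F(x,y)`, and `psmul` is multiplication by `p` in the formal group,
which satisfies `p Ê(𝔪) = Ê(𝔪^{1+e})`. -/
theorem stmt0 {O : Type*} [CommRing O] [IsDomain O] (π : O) (hπ : Irreducible π)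
    (p e : ℕ) (hp : p.Prime) (he : e < p - 1)
    (hvp : π ^ e ∣ (p : O) ∧ ¬ π ^ (e + 1) ∣ (p : O))
    (fadd : O → O → O) (F : O → O → O)
    (hadd : ∀ x y, fadd x y = x + y + x * y * F x y)
    (psmul : O → O)
    (hhom : ∀ x y, π ∣ x → π ∣ y → psmul (fadd x y) = fadd (psmul x) (psmul y))
    (hps1 : ∀ x, π ∣ x → π ^ (1 + e) ∣ psmul x)
    (hps2 : ∀ x, π ∣ x → π ^ (1 + e) ∣ x → ∃ β, π ∣ β ∧ psmul β = x)
    (α α' β : O) (hα : π ∣ α) (hα' : π ∣ α') (hβ : π ∣ β)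
    (heq : α = fadd α' (psmul β))
    (hnz : ¬ ∃ γ, π ∣ γ ∧ α = psmul γ)
    (n : ℕ) :
    (π ^ n ∣ α ∧ ¬ π ^ (n + 1) ∣ α) ↔ (π ^ n ∣ α' ∧ ¬ π ^ (n + 1) ∣ α') :=
  stmt0_general π e fadd F hadd psmul hps1 hps2 α α' β hα hβ heq hnz n
end

section
/- Let E be an elliptic curve over a totally ramified extension K of ℚ_p, where p > 3 is a prime, such that E has full K-rational 2-torsion and good supersingular reduction. Then j(E) ≢ 0 (mod 𝔪). -/
open Finset
lemma sum_pow_zmod (p : ℕ) [hp : Fact p.Prime] (i : ℕ) :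
    ∑ x : ZMod p, x ^ i = if i ≠ 0 ∧ (p - 1) ∣ i then -1 else 0 := by
  classical
  rcases eq_or_ne i 0 with rfl | hi
  · simp [ZMod.natCast_self]
  · have key := FiniteField.sum_pow_units (ZMod p) i
    rw [ZMod.card] at key
    have hsplit : ∑ x : ZMod p, x ^ i = ∑ x : (ZMod p)ˣ, (x : ZMod p) ^ i := by
      rw [← Finset.sum_subset (Finset.subset_univ ((univ : Finset (ZMod p)ˣ).image (Units.val)))]
      · rw [Finset.sum_image (fun a _ b _ h => Units.ext h)]
      · intro x _ hx
        have : x = 0 := by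
          by_contra h
          exact hx (Finset.mem_image.2 ⟨(Ne.isUnit h).unit, Finset.mem_univ _, rfl⟩)
        simp [this, zero_pow hi]
    rw [hsplit, key]; simp [hi]


lemma claimA (p : ℕ) [hp : Fact p.Prime] (hp3 : 3 < p) (lam : ZMod p) :
    ∑ x : ZMod p, (x * (x - 1) * (x - lam)) ^ ((p - 1) / 2)
      = -(-1 : ZMod p) ^ ((p - 1) / 2) *
        ∑ i ∈ Finset.range ((p - 1) / 2 + 1),
          ((Nat.choose ((p - 1) / 2) i : ZMod p)) ^ 2 * lam ^ i := by
  classical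
  have hodd : p % 2 = 1 := Nat.odd_iff.mp (hp.out.odd_of_ne_two (by omega))
  set m := (p - 1) / 2 with hm
  have h2m : 2 * m = p - 1 := by omega
  have hmpos : 0 < m := by omega
  set c : ℕ → ℕ → ZMod p := fun i j =>
    (-1 : ZMod p) ^ (m - i) * (Nat.choose m i : ZMod p) *
      ((-lam) ^ (m - j) * (Nat.choose m j : ZMod p)) with hc
  have e1 : ∀ x : ZMod p, (x * (x - 1) * (x - lam)) ^ m
      = ∑ i ∈ range (m + 1), ∑ j ∈ range (m + 1), c i j * x ^ (m + i + j) := by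
    intro x
    have hx1 : x - 1 = x + (-1) := by ring
    have hx2 : x - lam = x + (-lam) := by ring
    rw [hx1, hx2, mul_pow, mul_pow, add_pow, add_pow, mul_assoc, Finset.sum_mul_sum, Finset.mul_sum]
    refine Finset.sum_congr rfl fun i _ => ?_
    rw [Finset.mul_sum]
    refine Finset.sum_congr rfl fun j _ => ?_
    rw [hc]; ring
  calc ∑ x : ZMod p, (x * (x - 1) * (x - lam)) ^ m
      = ∑ x : ZMod p, ∑ i ∈ range (m + 1), ∑ j ∈ range (m + 1), c i j * x ^ (m + i + j) :=
        Finset.sum_congr rfl fun x _ => e1 x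
    _ = ∑ i ∈ range (m + 1), ∑ j ∈ range (m + 1), c i j * ∑ x : ZMod p, x ^ (m + i + j) := by
        rw [Finset.sum_comm]
        refine Finset.sum_congr rfl fun i _ => ?_
        rw [Finset.sum_comm]
        refine Finset.sum_congr rfl fun j _ => ?_
        rw [← Finset.mul_sum]
    _ = ∑ i ∈ range (m + 1), ∑ j ∈ range (m + 1), if j = m - i then c i j * (-1) else 0 := by
        refine Finset.sum_congr rfl fun i hi => Finset.sum_congr rfl fun j hj => ?_
        simp only [mem_range] at hi hj
        rw [sum_pow_zmod]
        have hiff : (m + i + j ≠ 0 ∧ (p - 1) ∣ (m + i + j)) ↔ j = m - i := by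
          rw [← h2m]
          constructor
          · rintro ⟨hne, k, hk⟩
            have hk2 : k ≤ 1 := by nlinarith
            interval_cases k <;> omega
          · rintro rfl
            exact ⟨by omega, 1, by omega⟩
        by_cases h : j = m - i
        · rw [if_pos (hiff.mpr h), if_pos h]
        · rw [if_neg (fun hh => h (hiff.mp hh)), if_neg h, mul_zero]
    _ = ∑ i ∈ range (m + 1), c i (m - i) * (-1) := by
        refine Finset.sum_congr rfl fun i hi => ?_
        rw [Finset.sum_ite_eq' (range (m + 1)) (m - i) (fun j => c i j * (-1)),
          if_pos (Finset.mem_range.mpr (by omega))]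
    _ = -(-1 : ZMod p) ^ m * ∑ i ∈ range (m + 1), ((Nat.choose m i : ZMod p)) ^ 2 * lam ^ i := by
        rw [Finset.mul_sum]
        refine Finset.sum_congr rfl fun i hi => ?_
        simp only [mem_range] at hi
        have hile : i ≤ m := by omega
        rw [hc]
        simp only
        rw [Nat.choose_symm hile, Nat.sub_sub_self hile, neg_pow lam i]
        have : (-1 : ZMod p) ^ (m - i) * (-1 : ZMod p) ^ i = (-1) ^ m := by
          rw [← pow_add, Nat.sub_add_cancel hile]
        ring_nf
        rw [← this]
        ring



lemma claimC (p : ℕ) [hp : Fact p.Prime] (hp3 : 3 < p) (h3 : 3 ∣ p - 1) (b : ZMod p) :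
    ∑ x : ZMod p, (x ^ 3 + b) ^ ((p - 1) / 2)
      = -(Nat.choose ((p - 1) / 2) ((p - 1) / 3) : ZMod p) * b ^ ((p - 1) / 2 - (p - 1) / 3) := by
  classical
  have hodd : p % 2 = 1 := Nat.odd_iff.mp (hp.out.odd_of_ne_two (by omega))
  set m := (p - 1) / 2 with hm
  set n := (p - 1) / 3 with hn
  have h2m : 2 * m = p - 1 := by omega
  have h3n : 3 * n = p - 1 := by omega
  have hnm : n ≤ m := by omega
  have hnpos : 0 < n := by omega
  have e1 : ∀ x : ZMod p, (x ^ 3 + b) ^ m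
      = ∑ k ∈ range (m + 1), ((Nat.choose m k : ZMod p) * b ^ (m - k)) * x ^ (3 * k) := by
    intro x
    rw [add_pow]
    refine Finset.sum_congr rfl fun k _ => ?_
    rw [← pow_mul]
    ring
  calc ∑ x : ZMod p, (x ^ 3 + b) ^ m
      = ∑ x : ZMod p, ∑ k ∈ range (m + 1), ((Nat.choose m k : ZMod p) * b ^ (m - k)) * x ^ (3 * k) :=
        Finset.sum_congr rfl fun x _ => e1 x
    _ = ∑ k ∈ range (m + 1), ((Nat.choose m k : ZMod p) * b ^ (m - k)) * ∑ x : ZMod p, x ^ (3 * k) := by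
        rw [Finset.sum_comm]
        exact Finset.sum_congr rfl fun k _ => (Finset.mul_sum _ _ _).symm
    _ = ∑ k ∈ range (m + 1), if k = n then ((Nat.choose m k : ZMod p) * b ^ (m - k)) * (-1) else 0 := by
        refine Finset.sum_congr rfl fun k hk => ?_
        simp only [mem_range] at hk
        rw [sum_pow_zmod]
        have hiff : (3 * k ≠ 0 ∧ (p - 1) ∣ (3 * k)) ↔ k = n := by
          rw [← h3n]
          constructor
          · rintro ⟨hne, k', hk'⟩
            have hk2 : k' ≤ 1 := by nlinarith
            interval_cases k' <;> omega
          · rintro rfl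
            exact ⟨by omega, 1, by omega⟩
        by_cases h : k = n
        · rw [if_pos (hiff.mpr h), if_pos h]
        · rw [if_neg (fun hh => h (hiff.mp hh)), if_neg h, mul_zero]
    _ = -(Nat.choose m n : ZMod p) * b ^ (m - n) := by
        rw [Finset.sum_ite_eq' (range (m + 1)) n
          (fun k => ((Nat.choose m k : ZMod p) * b ^ (m - k)) * (-1)),
          if_pos (Finset.mem_range.mpr (by omega))]
        ring

/-- reduced to the residue field `𝔽_p` (the reduction of the `j`-invariant
of `E` equals the `j`-invariant of the reduced Legendre curve `E_λ̄`): let `p > 3` be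
prime and `λ ∈ 𝔽_p` with `λ ≠ 0, 1` such that the Legendre curve `E_λ` over `𝔽_p` is
supersingular, i.e. `λ` is a root of the Deuring polynomial
`H_p(T) = ∑_{i=0}^{m} binom(m,i)² Tⁱ`, `m = (p-1)/2`.  Then the `j`-invariant
`j(E_λ) = 2⁸ (λ²-λ+1)³ / (λ²(1-λ)²)` is nonzero; i.e. for an elliptic curve `E` over a
totally ramified extension `K/ℚ_p` (`p > 3`) with full `K`-rational 2-torsion and good
supersingular reduction, `j(E) ≢ 0 (mod 𝔪)`. -/


theorem stmt9 (p : ℕ) [hp : Fact p.Prime] (hp3 : 3 < p)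
    (lam : ZMod p) (h0 : lam ≠ 0) (h1 : lam ≠ 1)
    (hss : ∑ i ∈ Finset.range ((p - 1) / 2 + 1),
        ((Nat.choose ((p - 1) / 2) i : ZMod p)) ^ 2 * lam ^ i = 0) :
    (2 : ZMod p) ^ 8 * (lam ^ 2 - lam + 1) ^ 3 / (lam ^ 2 * (1 - lam) ^ 2) ≠ 0 := by
  classical
  have h3ne : (3 : ZMod p) ≠ 0 := by
    intro h
    have : ((3 : ℕ) : ZMod p) = 0 := by push_cast; exact h
    have := (CharP.cast_eq_zero_iff (ZMod p) p 3).mp this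
    have := Nat.le_of_dvd (by norm_num) this
    omega
  have h2ne : (2 : ZMod p) ≠ 0 := by
    intro h
    have : ((2 : ℕ) : ZMod p) = 0 := by push_cast; exact h
    have := (CharP.cast_eq_zero_iff (ZMod p) p 2).mp this
    have := Nat.le_of_dvd (by norm_num) this
    omega
  have hq : lam ^ 2 - lam + 1 ≠ 0 := by
    intro hq
    -- Step 1: 3 ∣ p - 1
    have hmu3 : (lam ^ 2) ^ 3 = 1 := by linear_combination (lam^4 + lam^3 - lam - 1) * hq
    have hmune : lam ^ 2 ≠ 1 := by
      intro h
      rcases mul_eq_zero.mp (show (lam - 1) * (lam + 1) = 0 by linear_combination h) with h' | h'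
      · exact h1 (by linear_combination h')
      · exact h3ne (by linear_combination hq + (2 - lam) * h')
    have : Fact (Nat.Prime 3) := ⟨by norm_num⟩
    have horder : orderOf (lam ^ 2) = 3 := orderOf_eq_prime hmu3 hmune
    have h3dvd : 3 ∣ p - 1 := by
      rw [← horder]
      exact orderOf_dvd_of_pow_eq_one (ZMod.pow_card_sub_one_eq_one (pow_ne_zero 2 h0))
    -- Step 2: change of variables to y² = x³ + b
    set c : ZMod p := (1 + lam) * (3 : ZMod p)⁻¹ with hcdef
    have h3c : (3 : ZMod p) * c = 1 + lam := by
      rw [hcdef, ← mul_assoc, mul_comm (3 : ZMod p), mul_assoc, mul_inv_cancel₀ h3ne, mul_one]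
    have h9 : (1 + lam) ^ 2 = 3 * lam := by linear_combination hq
    have hc2 : 3 * c ^ 2 = lam := by
      have h33 : (3 : ZMod p) * (3 * c ^ 2) = 3 * lam := by
        linear_combination (3 * c + (1 + lam)) * h3c + h9
      exact mul_left_cancel₀ h3ne h33
    set b : ZMod p := c * (c - 1) * (c - lam) with hbdef
    have hshift : ∀ x : ZMod p, (x + c) * ((x + c) - 1) * ((x + c) - lam) = x ^ 3 + b := by
      intro x
      rw [hbdef]
      linear_combination (x ^ 2 + 2 * c * x) * h3c - x * hc2
    have hbne : b ≠ 0 := by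
      rw [hbdef]
      refine mul_ne_zero (mul_ne_zero ?_ ?_) ?_
      · intro h
        have hcl : (1 : ZMod p) + lam = 0 := by rw [← h3c, h, mul_zero]
        exact h3ne (by linear_combination hq + (2 - lam) * hcl)
      · intro h
        have hcl : (1 : ZMod p) + lam = 3 := by
          rw [← h3c, show c = 1 by linear_combination h, mul_one]
        exact h3ne (by linear_combination hq - (lam + 1) * hcl + hcl - hcl)
      · intro h
        have hcl : (3 : ZMod p) * lam = 1 + lam := by
          rw [← h3c, show c = lam by linear_combination h]
        exact h3ne (by linear_combination 4 * hq - (2 * lam - 1) * hcl)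
    -- Step 3: compare the two point sums
    have hsum1 : ∑ x : ZMod p, (x * (x - 1) * (x - lam)) ^ ((p - 1) / 2) = 0 := by
      rw [claimA p hp3 lam, hss, mul_zero]
    have hsum2 : ∑ x : ZMod p, (x * (x - 1) * (x - lam)) ^ ((p - 1) / 2)
        = ∑ x : ZMod p, (x ^ 3 + b) ^ ((p - 1) / 2) := by
      refine (Fintype.sum_equiv (Equiv.addRight c)
        (fun x => ((x + c) * ((x + c) - 1) * ((x + c) - lam)) ^ ((p - 1) / 2)
          ) (fun x => (x * (x - 1) * (x - lam)) ^ ((p - 1) / 2)) (fun x => rfl)).symm.trans ?_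
      exact Finset.sum_congr rfl fun x _ => by rw [hshift x]
    have hfin : -(Nat.choose ((p - 1) / 2) ((p - 1) / 3) : ZMod p)
        * b ^ ((p - 1) / 2 - (p - 1) / 3) = 0 := by
      rw [← claimC p hp3 h3dvd b, ← hsum2, hsum1]
    have hchoose : ((Nat.choose ((p - 1) / 2) ((p - 1) / 3) : ℕ) : ZMod p) = 0 := by
      rcases mul_eq_zero.mp hfin with h | h
      · exact neg_eq_zero.mp h
      · exact absurd h (pow_ne_zero _ hbne)
    have hdvd : p ∣ Nat.choose ((p - 1) / 2) ((p - 1) / 3) :=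
      (CharP.cast_eq_zero_iff (ZMod p) p _).mp hchoose
    have hnm : (p - 1) / 3 ≤ (p - 1) / 2 := by omega
    have hfac : Nat.choose ((p - 1) / 2) ((p - 1) / 3) * ((p - 1) / 3).factorial
        * ((p - 1) / 2 - (p - 1) / 3).factorial = ((p - 1) / 2).factorial :=
      Nat.choose_mul_factorial_mul_factorial hnm
    have hpfac : p ∣ ((p - 1) / 2).factorial := hfac ▸ (hdvd.mul_right _).mul_right _
    have := (Nat.Prime.dvd_factorial hp.out).mp hpfac
    omega
  have hd : lam ^ 2 * (1 - lam) ^ 2 ≠ 0 :=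
    mul_ne_zero (pow_ne_zero _ h0) (pow_ne_zero _ (sub_ne_zero.mpr (Ne.symm h1)))
  exact div_ne_zero (mul_ne_zero (pow_ne_zero 8 h2ne) (pow_ne_zero 3 hq)) hd
end

section
/- Let a, b, c, d ∈ K^× with a ≠ b, c ≠ d, and ad - bc ≠ 0, and let C be the Scholten curve (ad-bc)Y² = ((a-b)X² - (c-d))(aX² - c)(bX² - d). Then the map φ_{a,b}(X,Y) = ( (ab(a-b)/(ad-bc))·(X² - (c-d)/(a-b)), (ab(a-b)/(ad-bc))·Y ) sends points of C to points of the elliptic curve E_{a,b} : y² = x(x-a)(x-b); i.e., if (X,Y) satisfies the equation of C then φ_{a,b}(X,Y) satisfies the equation of E_{a,b}. -/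
/-! With `D = ad - bc` and `x = ab(a-b)/D · (X² - (c-d)/(a-b))`, the factors `x`, `x - a`, `x - b`
of the Weierstrass cubic are the factors of the Scholten sextic scaled by `ab/D`, `a(a-b)/D`,
`b(a-b)/D`. Hence `x(x-a)(x-b) = (ab(a-b)/D)² / D · sextic`, which is `(ab(a-b)/D · Y)²` on
the curve. -/

section ScholtenCover

variable {K : Type*} [Field K] {a b c d : K} (X : K)

theorem scholten_x_eq (hab : a - b ≠ 0) :
    a * b * (a - b) / (a * d - b * c) * (X ^ 2 - (c - d) / (a - b)) =
      a * b / (a * d - b * c) * ((a - b) * X ^ 2 - (c - d)) := by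
  field_simp

theorem scholten_x_sub_left (hab : a - b ≠ 0) (habcd : a * d - b * c ≠ 0) :
    a * b * (a - b) / (a * d - b * c) * (X ^ 2 - (c - d) / (a - b)) - a =
      a * (a - b) / (a * d - b * c) * (b * X ^ 2 - d) := by
  field_simp
  ring

theorem scholten_x_sub_right (hab : a - b ≠ 0) (habcd : a * d - b * c ≠ 0) :
    a * b * (a - b) / (a * d - b * c) * (X ^ 2 - (c - d) / (a - b)) - b =
      b * (a - b) / (a * d - b * c) * (a * X ^ 2 - c) := by
  field_simp
  ring

end ScholtenCover

theorem stmt11_general {K : Type*} [Field K]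
    (a b c d : K)
    (hab : a ≠ b) (habcd : a * d - b * c ≠ 0)
    (X Y : K)
    (hC : (a * d - b * c) * Y ^ 2 =
      ((a - b) * X ^ 2 - (c - d)) * (a * X ^ 2 - c) * (b * X ^ 2 - d)) :
    (a * b * (a - b) / (a * d - b * c) * Y) ^ 2 =
      (a * b * (a - b) / (a * d - b * c) * (X ^ 2 - (c - d) / (a - b))) *
        (a * b * (a - b) / (a * d - b * c) * (X ^ 2 - (c - d) / (a - b)) - a) *
        (a * b * (a - b) / (a * d - b * c) * (X ^ 2 - (c - d) / (a - b)) - b) := by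
  have hab' : a - b ≠ 0 := sub_ne_zero.mpr hab
  rw [scholten_x_sub_left X hab' habcd, scholten_x_sub_right X hab' habcd,
    scholten_x_eq X hab']
  calc (a * b * (a - b) / (a * d - b * c) * Y) ^ 2
      = (a * b * (a - b) / (a * d - b * c)) ^ 2 / (a * d - b * c) *
          ((a * d - b * c) * Y ^ 2) := by field_simp
    _ = (a * b * (a - b) / (a * d - b * c)) ^ 2 / (a * d - b * c) *
          (((a - b) * X ^ 2 - (c - d)) * (a * X ^ 2 - c) * (b * X ^ 2 - d)) := by rw [hC]
    _ = _ := by ring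

/-- the map `φ_{a,b}` sends points of the Scholten curve
`(ad-bc)Y² = ((a-b)X² - (c-d))(aX² - c)(bX² - d)` to points of the elliptic curve
`E_{a,b} : y² = x(x-a)(x-b)`. -/
theorem stmt11 {K : Type*} [Field K] (hchar : (2 : K) ≠ 0)
    (a b c d : K) (ha : a ≠ 0) (hb : b ≠ 0) (hc : c ≠ 0) (hd : d ≠ 0)
    (hab : a ≠ b) (hcd : c ≠ d) (habcd : a * d - b * c ≠ 0)
    (X Y : K)
    (hC : (a * d - b * c) * Y ^ 2 =
      ((a - b) * X ^ 2 - (c - d)) * (a * X ^ 2 - c) * (b * X ^ 2 - d)) :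
    (a * b * (a - b) / (a * d - b * c) * Y) ^ 2 =
      (a * b * (a - b) / (a * d - b * c) * (X ^ 2 - (c - d) / (a - b))) *
        (a * b * (a - b) / (a * d - b * c) * (X ^ 2 - (c - d) / (a - b)) - a) *
        (a * b * (a - b) / (a * d - b * c) * (X ^ 2 - (c - d) / (a - b)) - b) :=
  stmt11_general a b c d hab habcd X Y hC
end
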